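/- arXiv:1606.02081 — 3 statements merged into one kernel-verified Lean document; each statement's English description precedes it below -/
import Mathlib

section
/- A non-decreasing sequence (d_1, ..., d_n) of non-negative rational numbers is the score sequence of some self-converse generalised tournament on n vertices if and only if it satisfies condition I (for every subset J of {1,...,n}, the sum of d_i over i in J is at least binom(|J|,2), with equality when J = {1,...,n}) and condition II (d_i + d_{n+1-i} = n - 1 for all i = 1,...,n). -/
/-- A generalised tournament on vertex set `Fin n`. -/
def IsGenTournament {n : ℕ} (α : Fin n → Fin n → ℝ) : Prop :=
  (∀ i j, 0 ≤ α i j) ∧ (∀ i j, α i j ≤ 1) ∧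
  (∀ i j, i ≠ j → α i j + α j i = 1) ∧ (∀ i, α i i = 0)

/-- Self-converse: some bijection is an isomorphism onto the converse. -/
def IsSelfConverse {n : ℕ} (α : Fin n → Fin n → ℝ) : Prop :=
  ∃ ρ : Equiv.Perm (Fin n), ∀ i j, i ≠ j → α i j = 1 - α (ρ i) (ρ j)

/-- Condition I for a rational sequence. -/
def CondIQ {n : ℕ} (d : Fin n → ℚ) : Prop :=
  (∀ J : Finset (Fin n), (J.card.choose 2 : ℚ) ≤ ∑ i ∈ J, d i) ∧
  ∑ i, d i = (n.choose 2 : ℚ)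

/-- Condition II for a rational sequence (`Fin.rev` plays the role of `i ↦ n+1-i`). -/
def CondIIQ {n : ℕ} (d : Fin n → ℚ) : Prop :=
  ∀ i : Fin n, d i + d i.rev = (n : ℚ) - 1

/-!
Double counting the arcs inside a vertex set `J` gives condition I for the scores of any
generalised tournament. If `ρ` is an isomorphism onto the converse, then `d i + d (ρ i) = n - 1`;
since `d` and `i ↦ n - 1 - d (rev i)` are then sorted rearrangements of each other, they are
equal, which is condition II.

Conversely, Moon's theorem provides a generalised tournament `α` with scores `d`. It is built one
vertex at a time: the strongest vertex `n` beats each `j < n` by `x j`, the value `θ - d j`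
clamped to `[0, 1]`, for a water level `θ` chosen to give it score `d n`. The remaining scores
`d j - 1 + x j` stay sorted, and Landau's prefix conditions survive because the gap in them is
concave in the prefix length along the stretch where `d j + x j = θ`. Finally, averaging `α` with its converse relabelled by
`Fin.rev` makes `Fin.rev` an isomorphism onto the converse, and by condition II it keeps the
scores.
-/

open Finset

namespace IsGenTournament

variable {n : ℕ} {α : Fin n → Fin n → ℝ}

lemma add_swap (h : IsGenTournament α) (i j : Fin n) :
    α i j + α j i = if i = j then 0 else 1 := by
  split_ifs with hij
  · subst hij; simp [h.2.2.2 i]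
  · exact h.2.2.1 i j hij

lemma sum_add_swap (h : IsGenTournament α) {J : Finset (Fin n)} {i : Fin n} (hi : i ∈ J) :
    ∑ j ∈ J, (α i j + α j i) = #J - 1 := by
  simp only [h.add_swap, sum_ite, sum_const_zero, zero_add, sum_const, nsmul_one]
  rw [filter_ne, card_erase_of_mem hi, Nat.cast_sub (one_le_card.2 ⟨i, hi⟩), Nat.cast_one]

lemma sum_sum_eq (h : IsGenTournament α) (J : Finset (Fin n)) :
    ∑ i ∈ J, ∑ j ∈ J, α i j = #J * (#J - 1) / 2 := by
  have hdouble : 2 * ∑ i ∈ J, ∑ j ∈ J, α i j = ∑ i ∈ J, ∑ j ∈ J, (α i j + α j i) := by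
    simp only [sum_add_distrib, two_mul]
    rw [sum_comm (f := fun i j => α j i)]
  rw [sum_congr rfl fun i hi => h.sum_add_swap hi, sum_const, nsmul_eq_mul] at hdouble
  linarith

lemma choose_two_le_sum (h : IsGenTournament α) (J : Finset (Fin n)) :
    ((#J).choose 2 : ℝ) ≤ ∑ i ∈ J, ∑ j, α i j := by
  rw [Nat.cast_choose_two, ← h.sum_sum_eq J]
  exact sum_le_sum fun i _ => sum_le_sum_of_subset_of_nonneg (subset_univ J)
    fun j _ _ => h.1 i j

lemma sum_apply_left (h : IsGenTournament α) (i : Fin n) :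
    ∑ k, α k i = n - 1 - ∑ k, α i k := by
  have := h.sum_add_swap (mem_univ i)
  rw [sum_add_distrib, card_univ, Fintype.card_fin] at this
  linarith

end IsGenTournament

section revSymm

variable {n : ℕ} {α : Fin n → Fin n → ℝ}

noncomputable def revSymm (α : Fin n → Fin n → ℝ) (i j : Fin n) : ℝ := (α i j + α j.rev i.rev) / 2

lemma isGenTournament_revSymm (h : IsGenTournament α) :
    IsGenTournament (revSymm α) := by
  obtain ⟨h0, h1, hswap, hdiag⟩ := h
  refine ⟨fun i j => ?_, fun i j => ?_, fun i j hij => ?_, fun i => ?_⟩ <;> simp only [revSymm]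
  · linarith [h0 i j, h0 j.rev i.rev]
  · linarith [h1 i j, h1 j.rev i.rev]
  · linarith [hswap i j hij, hswap j.rev i.rev (Fin.rev_injective.ne hij.symm)]
  · simp [hdiag]

lemma isSelfConverse_revSymm (h : IsGenTournament α) :
    IsSelfConverse (revSymm α) := by
  refine ⟨Fin.revPerm, fun i j hij => ?_⟩
  simp only [revSymm, Fin.revPerm_apply, Fin.rev_rev]
  linarith [h.2.2.1 i j hij, h.2.2.1 j.rev i.rev (Fin.rev_injective.ne hij.symm)]

lemma sum_revSymm (h : IsGenTournament α) (i : Fin n) :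
    ∑ j, revSymm α i j = (∑ j, α i j + (n - 1 - ∑ j, α i.rev j)) / 2 := by
  rw [← h.sum_apply_left, ← Equiv.sum_comp Fin.revPerm (fun k => α k i.rev),
    ← sum_add_distrib, sum_div]
  rfl

lemma IsSelfConverse.exists_sum_add_sum_perm (hα : IsGenTournament α)
    (h : IsSelfConverse α) :
    ∃ ρ : Equiv.Perm (Fin n), ∀ i, ∑ j, α i j + ∑ j, α (ρ i) j = n - 1 := by
  obtain ⟨ρ, hρ⟩ := h
  refine ⟨ρ, fun i => ?_⟩
  have hsub : ∀ j, α i j + α (ρ i) (ρ j) = α i j + α j i := fun j => by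
    rcases eq_or_ne i j with rfl | hij
    · simp [hα.2.2.2]
    · rw [hα.2.2.1 i j hij, hρ i j hij]; ring
  rw [← Equiv.sum_comp ρ (fun k => α (ρ i) k), ← sum_add_distrib, sum_congr rfl fun j _ => hsub j,
    hα.sum_add_swap (mem_univ i), card_univ, Fintype.card_fin]

end revSymm

/-- `d` and `c - d ∘ Fin.rev` are monotone rearrangements of each other, hence equal. -/
lemma add_apply_rev_of_add_apply_perm {n : ℕ} {G : Type*} [AddCommGroup G] [PartialOrder G]
    [IsOrderedAddMonoid G] {d : Fin n → G} (hd : Monotone d) {c : G} (ρ : Equiv.Perm (Fin n))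
    (h : ∀ i, d i + d (ρ i) = c) (i : Fin n) : d i + d i.rev = c := by
  set e : Fin n → G := fun j => c - d j.rev
  have he : Monotone e := fun a b hab => sub_le_sub_left (hd (Fin.rev_le_rev.2 hab)) c
  have hde : e ∘ (ρ.trans Fin.revPerm) = d := funext fun j => by
    simp [e, ← h j]
  have := Tuple.unique_monotone (f := e) (σ := ρ.trans Fin.revPerm) (τ := 1)
    (hde ▸ hd) he
  rw [hde] at this
  have hi := congrFun this i
  simp only [Equiv.Perm.coe_one, Function.comp_id, e] at hi
  rw [hi]; abel

section scores

variable {n : ℕ} {α : Fin n → Fin n → ℝ} {d : Fin n → ℚ}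

lemma IsGenTournament.condIQ (hα : IsGenTournament α) (hrow : ∀ i, ∑ j, α i j = d i) :
    CondIQ d := by
  refine ⟨fun J => ?_, ?_⟩
  · have := hα.choose_two_le_sum J
    simp only [hrow] at this
    exact_mod_cast this
  · have := hα.sum_sum_eq univ
    simp only [hrow, card_univ, Fintype.card_fin] at this
    rw [← Nat.cast_choose_two] at this
    exact_mod_cast this

lemma IsGenTournament.condIIQ (hα : IsGenTournament α) (hsc : IsSelfConverse α)
    (hrow : ∀ i, ∑ j, α i j = d i) (hmono : Monotone d) : CondIIQ d := by
  obtain ⟨ρ, hρ⟩ := hsc.exists_sum_add_sum_perm hα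
  refine add_apply_rev_of_add_apply_perm hmono ρ fun i => ?_
  have := hρ i
  rw [hrow, hrow] at this
  exact_mod_cast this

end scores

/-- `t ↦ A + (t - M) θ - t (t + 1) / 2` is concave, so it is nonnegative between two points
where it is. -/
lemma mul_succ_div_two_le_of_endpoints {A θ M k q : ℝ} (hMk : M ≤ k) (hkq : k ≤ q)
    (hM : M * (M + 1) / 2 ≤ A) (hq : q * (q + 1) / 2 ≤ A + (q - M) * θ) : k * (k + 1) / 2 ≤ A + (k - M) * θ := by
  rcases le_total θ ((q + k + 1) / 2) with hθ | hθ
  · nlinarith [mul_nonneg (sub_nonneg.2 hkq) (sub_nonneg.2 hθ)]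
  · nlinarith [mul_nonneg (sub_nonneg.2 hMk) (sub_nonneg.2 hθ)]

/-- Landau's conditions on the first `n` terms of a sequence. -/
structure IsLandauSeq (n : ℕ) (d : ℕ → ℝ) : Prop where
  monotoneOn : MonotoneOn d (Set.Iio n)
  le_sum_range : ∀ k ≤ n, (k : ℝ) * (k - 1) / 2 ≤ ∑ j ∈ range k, d j
  sum_range : ∑ j ∈ range n, d j = n * (n - 1) / 2

lemma exists_sum_projIcc_sub_eq {ι : Type*} (s : Finset ι) {a : ι → ℝ} {lo hi t : ℝ}
    (ha : ∀ j ∈ s, a j ∈ Set.Icc lo hi) (ht : t ∈ Set.Icc 0 (#s : ℝ)) :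
    ∃ θ, ∑ j ∈ s, (Set.projIcc 0 1 zero_le_one (θ - a j) : ℝ) = t := by
  set f : ℝ → ℝ := fun θ => ∑ j ∈ s, (Set.projIcc (0 : ℝ) 1 zero_le_one (θ - a j) : ℝ)
  have hcont : Continuous f := continuous_finsetSum s fun j _ =>
    continuous_subtype_val.comp (continuous_projIcc.comp (continuous_sub_right (a j)))
  have hlo : f lo = 0 := sum_eq_zero fun j hj => by
    rw [Set.projIcc_of_le_left _ (by linarith [(ha j hj).1])]
  have hhi : f (hi + 1) = #s := by
    rw [← nsmul_one, ← sum_const]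
    exact sum_congr rfl fun j hj => by
      rw [Set.projIcc_of_right_le _ (by linarith [(ha j hj).2])]
  obtain ⟨θ, -, hθ⟩ := intermediate_value_uIcc hcont.continuousOn
    (Set.Icc_subset_uIcc (hlo ▸ hhi ▸ ht))
  exact ⟨θ, hθ⟩

lemma Nat.exists_split_of_monotoneOn {n : ℕ} {P : ℕ → Prop} (hP : MonotoneOn P (Set.Iio n)) :
    ∃ m ≤ n, (∀ j < m, ¬ P j) ∧ ∀ j, m ≤ j → j < n → P j := by
  classical
  have hex : ∃ m, n ≤ m ∨ P m := ⟨n, Or.inl le_rfl⟩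
  refine ⟨Nat.find hex, Nat.find_min' hex (Or.inl le_rfl), fun j hj => ?_, fun j hmj hjn => ?_⟩
  · exact fun hPj => Nat.find_min hex hj (Or.inr hPj)
  · rcases Nat.find_spec hex with h | h
    · omega
    · exact hP (hmj.trans_lt hjn) hjn hmj h

namespace IsLandauSeq

variable {n : ℕ} {d : ℕ → ℝ}

lemma nonneg (hd : IsLandauSeq n d) {j : ℕ} (hj : j < n) : 0 ≤ d j :=
  (by simpa using hd.le_sum_range 1 (by omega) : 0 ≤ d 0).trans
    (hd.monotoneOn (by simp; omega) hj (Nat.zero_le j))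

lemma le_sum_range_add_of_split (hd : IsLandauSeq (n + 1) d) {x : ℕ → ℝ} {θ : ℝ} {M q : ℕ}
    (hMq : M ≤ q) (hqn : q ≤ n) (hx1 : ∀ j < M, x j = 1)
    (hxθ : ∀ j, M ≤ j → j < q → d j + x j = θ) (hx0 : ∀ j, q ≤ j → j < n → x j = 0)
    (hxn : ∑ j ∈ range n, x j = d n) {k : ℕ} (hk : k ≤ n) :
    (k : ℝ) * (k + 1) / 2 ≤ ∑ j ∈ range k, (d j + x j) := by
  have hlow : ∀ k ≤ M, (k : ℝ) * (k + 1) / 2 ≤ ∑ j ∈ range k, (d j + x j) := fun k hkM => by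
    rw [sum_add_distrib, sum_congr rfl fun j hj => hx1 j ((mem_range.1 hj).trans_le hkM)]
    simp only [sum_const, card_range, nsmul_one]
    linarith [hd.le_sum_range k (by omega)]
  have hhigh : ∀ k, q ≤ k → k ≤ n → (k : ℝ) * (k + 1) / 2 ≤ ∑ j ∈ range k, (d j + x j) :=
    fun k hqk hkn => by
    have htail : ∑ j ∈ Ico k n, x j = 0 :=
      sum_eq_zero fun j hj => hx0 j (hqk.trans (mem_Ico.1 hj).1) (mem_Ico.1 hj).2
    have hdk : d k ≤ d n := hd.monotoneOn (by simp; omega) (by simp) hkn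
    have := hd.le_sum_range (k + 1) (by omega)
    rw [sum_range_succ] at this
    push_cast at this
    rw [sum_add_distrib]
    linarith [sum_range_add_sum_Ico x hkn]
  have hmid : ∀ k, M ≤ k → k ≤ q →
      ∑ j ∈ range k, (d j + x j) = ∑ j ∈ range M, (d j + x j) + (k - M) * θ := fun k hMk hkq => by
    rw [← sum_range_add_sum_Ico _ hMk,
      sum_congr rfl fun j hj => hxθ j (mem_Ico.1 hj).1 ((mem_Ico.1 hj).2.trans_le hkq)]
    simp [Nat.cast_sub hMk]
  rcases le_total k M with hkM | hMk
  · exact hlow k hkM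
  rcases le_total q k with hqk | hkq
  · exact hhigh k hqk hk
  rw [hmid k hMk hkq]
  have hM := hlow M le_rfl
  have hq := hmid q hMq le_rfl ▸ hhigh q le_rfl hqn
  exact mul_succ_div_two_le_of_endpoints (by exact_mod_cast hMk) (by exact_mod_cast hkq) hM hq

lemma exists_residual (hd : IsLandauSeq (n + 1) d) :
    ∃ x : ℕ → ℝ, (∀ j, x j ∈ Set.Icc 0 1) ∧ ∑ j ∈ range n, x j = d n ∧
      IsLandauSeq n (fun j => d j - 1 + x j) := by
  have hmono : ∀ {i j}, i ≤ j → j ≤ n → d i ≤ d j := fun hij hjn =>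
    hd.monotoneOn (by simp; omega) (by simp; omega) hij
  have hdn : d n ≤ n := by
    have := hd.sum_range
    rw [sum_range_succ] at this
    push_cast at this
    linarith [hd.le_sum_range n (by omega)]
  obtain ⟨θ, hθ⟩ := exists_sum_projIcc_sub_eq (range n) (lo := 0) (hi := d n) (t := d n)
    (fun j hj => ⟨hd.nonneg (by simp at hj; omega), hmono (mem_range.1 hj).le le_rfl⟩)
    (by simpa using ⟨hd.nonneg (Nat.lt_succ_self n), hdn⟩)
  set x : ℕ → ℝ := fun j => Set.projIcc 0 1 zero_le_one (θ - d j)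
  have hsplit (P : ℝ → Prop) (hP : Monotone P) :
      ∃ m ≤ n, (∀ j < m, ¬ P (d j)) ∧ ∀ j, m ≤ j → j < n → P (d j) :=
    Nat.exists_split_of_monotoneOn <|
      hP.comp_monotoneOn (hd.monotoneOn.mono (Set.Iio_subset_Iio n.le_succ))
  obtain ⟨M, hMn, hbelowM, haboveM⟩ := hsplit (θ - 1 < ·) fun _ _ h h' => h'.trans_le h
  obtain ⟨q, hqn, hbelowq, haboveq⟩ := hsplit (θ ≤ ·) fun _ _ h h' => h'.trans h
  have hMq : M ≤ q := by
    by_contra! h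
    linarith [not_lt.1 (hbelowM q h), haboveq q le_rfl (by omega)]
  refine ⟨x, fun j => (Set.projIcc _ _ _ _).2, hθ, ⟨fun i hi j hj hij => ?_, fun k hk => ?_, ?_⟩⟩
  · have := (abs_le.1 (Set.abs_projIcc_sub_projIcc zero_le_one (c := θ - d i) (d := θ - d j))).2
    rw [sub_sub_sub_cancel_left, abs_of_nonneg (sub_nonneg.2 (hmono hij (Set.mem_Iio.1 hj).le))]
      at this
    simp only [x]
    linarith
  · have := hd.le_sum_range_add_of_split hMq hqn (x := x)
      (fun j hj => by
        simp only [x]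
        rw [Set.projIcc_of_right_le _ (by linarith [not_lt.1 (hbelowM j hj)])])
      (fun j hMj hjq => by
        simp only [x]
        rw [Set.projIcc_of_mem _ ⟨by linarith [not_le.1 (hbelowq j hjq)],
          by linarith [haboveM j hMj (by omega)]⟩]
        ring)
      (fun j hqj hjn => by
        simp only [x]
        rw [Set.projIcc_of_le_left _ (by linarith [haboveq j hqj hjn])])
      hθ hk
    simp only [sub_add_eq_add_sub, sum_sub_distrib, sum_const, card_range, nsmul_one]
    linarith
  · have := hd.sum_range
    rw [sum_range_succ] at this
    push_cast at this
    simp only [sub_add_eq_add_sub, sum_sub_distrib, sum_add_distrib, sum_const, card_range,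
      nsmul_one, hθ]
    linarith

end IsLandauSeq

/-- The new vertex `Fin.last n` scores `x i` against the old vertex `i`. -/
noncomputable def snocVertex {n : ℕ} (α : Fin n → Fin n → ℝ) (x : Fin n → ℝ) :
    Fin (n + 1) → Fin (n + 1) → ℝ :=
  Fin.snoc (fun i => Fin.snoc (α i) (1 - x i)) (Fin.snoc x 0)

section snocVertex

variable {n : ℕ} {α : Fin n → Fin n → ℝ} {x : Fin n → ℝ}

lemma isGenTournament_snocVertex (h : IsGenTournament α) (hx : ∀ i, x i ∈ Set.Icc 0 1) :
    IsGenTournament (snocVertex α x) := by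
  obtain ⟨h0, h1, hswap, hdiag⟩ := h
  refine ⟨fun i j => ?_, fun i j => ?_, fun i j hij => ?_, fun i => ?_⟩ <;>
  · induction i using Fin.lastCases <;> try induction j using Fin.lastCases
    all_goals simp_all [snocVertex, (hx _).1, (hx _).2]

lemma sum_snocVertex_castSucc (i : Fin n) :
    ∑ j, snocVertex α x i.castSucc j = ∑ j, α i j + (1 - x i) := by
  simp [snocVertex, Fin.sum_univ_castSucc]

lemma sum_snocVertex_last : ∑ j, snocVertex α x (Fin.last n) j = ∑ i, x i := by
  simp [snocVertex, Fin.sum_univ_castSucc]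

end snocVertex

/-- Moon's theorem. -/
theorem IsLandauSeq.exists_isGenTournament : ∀ {n : ℕ} {d : ℕ → ℝ}, IsLandauSeq n d →
    ∃ α : Fin n → Fin n → ℝ, IsGenTournament α ∧ ∀ i : Fin n, ∑ j, α i j = d i
  | 0, _, _ => ⟨fun i => i.elim0, ⟨fun i => i.elim0, fun i => i.elim0, fun i => i.elim0,
      fun i => i.elim0⟩, fun i => i.elim0⟩
  | n + 1, d, hd => by
    obtain ⟨x, hx, hxn, hres⟩ := hd.exists_residual
    obtain ⟨α, hα, hrow⟩ := hres.exists_isGenTournament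
    refine ⟨snocVertex α (fun i => x i), isGenTournament_snocVertex hα fun i => hx i,
      fun i => ?_⟩
    induction i using Fin.lastCases with
    | last => rw [sum_snocVertex_last, Fin.sum_univ_eq_sum_range x, hxn, Fin.val_last]
    | cast i => rw [sum_snocVertex_castSucc, hrow, Fin.val_castSucc]; ring

lemma isLandauSeq_of_condIQ {n : ℕ} {d : Fin n → ℚ} (hmono : Monotone d) (hI : CondIQ d) :
    IsLandauSeq n fun k => if h : k < n then (d ⟨k, h⟩ : ℝ) else 0 := by
  refine ⟨fun i hi j hj hij => ?_, fun k hk => ?_, ?_⟩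
  · simp only [dif_pos (Set.mem_Iio.1 hi), dif_pos (Set.mem_Iio.1 hj)]
    exact_mod_cast hmono (show (⟨i, hi⟩ : Fin n) ≤ ⟨j, hj⟩ from hij)
  · have hJ := hI.1 (univ.map (Fin.castLEEmb hk))
    rw [card_map, card_univ, Fintype.card_fin] at hJ
    have hsum : ∑ j ∈ range k, (if h : j < n then (d ⟨j, h⟩ : ℝ) else 0) =
        ((∑ i ∈ univ.map (Fin.castLEEmb hk), d i : ℚ) : ℝ) := by
      rw [sum_map, Rat.cast_sum, ← Fin.sum_univ_eq_sum_range]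
      exact sum_congr rfl fun i _ => by simp [i.is_lt.trans_le hk]; rfl
    rw [hsum, ← Nat.cast_choose_two]
    exact_mod_cast hJ
  · rw [← Fin.sum_univ_eq_sum_range, ← Nat.cast_choose_two]
    simp only [Fin.is_lt, dif_pos, Fin.eta]
    exact_mod_cast hI.2

theorem selfConverse_gen_tournament_rat_score_iff_general (n : ℕ) (d : Fin n → ℚ)
    (hmono : Monotone d) :
    (∃ α : Fin n → Fin n → ℝ, IsGenTournament α ∧ IsSelfConverse α ∧
      ∀ i, ∑ j, α i j = (d i : ℝ)) ↔ (CondIQ d ∧ CondIIQ d) := by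
  refine ⟨fun ⟨α, hα, hsc, hrow⟩ => ⟨hα.condIQ hrow, hα.condIIQ hsc hrow hmono⟩,
    fun ⟨hI, hII⟩ => ?_⟩
  obtain ⟨α, hα, hrow⟩ := (isLandauSeq_of_condIQ hmono hI).exists_isGenTournament
  have hrow' (i : Fin n) : ∑ j, α i j = d i := by simp [hrow]
  refine ⟨revSymm α, isGenTournament_revSymm hα, isSelfConverse_revSymm hα, fun i => ?_⟩
  have hrev : (d i.rev : ℝ) = n - 1 - d i := by
    have := congrArg (Rat.cast : ℚ → ℝ) (hII i)
    push_cast at this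
    linarith
  rw [sum_revSymm hα, hrow', hrow', hrev]
  ring

/-- A non-decreasing sequence of non-negative rationals is the score sequence of some
self-converse generalised tournament iff it satisfies conditions I and II. -/
theorem selfConverse_gen_tournament_rat_score_iff (n : ℕ) (d : Fin n → ℚ)
    (hmono : Monotone d) (hpos : ∀ i, 0 ≤ d i) :
    (∃ α : Fin n → Fin n → ℝ, IsGenTournament α ∧ IsSelfConverse α ∧
      ∀ i, ∑ j, α i j = (d i : ℝ)) ↔ (CondIQ d ∧ CondIIQ d) :=
  selfConverse_gen_tournament_rat_score_iff_general n d hmono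
end

section
/- A non-decreasing sequence (d_1, ..., d_n) of non-negative real numbers is the score sequence of some generalised tournament on n vertices if and only if it satisfies condition I: for every subset J of {1,...,n}, the sum of d_i over i in J is at least binom(|J|,2), with equality when J = {1,...,n}. -/
/-- Condition I. -/
def CondI {n : ℕ} (d : Fin n → ℝ) : Prop :=
  (∀ J : Finset (Fin n), (J.card.choose 2 : ℝ) ≤ ∑ i ∈ J, d i) ∧
  ∑ i, d i = (n.choose 2 : ℝ)

open Finset

lemma sum_range_cast_eq_choose_two (m : ℕ) : ∑ i ∈ range m, (i : ℝ) = (m.choose 2 : ℝ) := by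
  induction m with
  | zero => simp
  | succ m ih =>
    rw [sum_range_succ, ih, Nat.choose_succ_succ', Nat.choose_one_right]
    push_cast
    ring

lemma sum_range_mul_le_of_monotoneOn {a g : ℕ → ℝ} {n : ℕ} (ha : MonotoneOn a (Set.Iio n))
    (hg : ∀ m ≤ n, 0 ≤ ∑ i ∈ range m, g i) :
    ∑ i ∈ range n, a i * g i ≤ a (n - 1) * ∑ i ∈ range n, g i := by
  have := sum_range_by_parts a g n
  simp only [smul_eq_mul] at this
  rw [this, sub_le_self_iff]
  refine sum_nonneg fun i hi => mul_nonneg (sub_nonneg.2 ?_) (hg _ ?_)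
  · rw [mem_range] at hi
    exact ha (by simp; omega) (by simp; omega) (by omega)
  · rw [mem_range] at hi; omega

lemma CondI.le_sum_castLE {n : ℕ} {d : Fin n → ℝ} (hd : CondI d) {m : ℕ} (hm : m ≤ n) :
    (m.choose 2 : ℝ) ≤ ∑ i : Fin m, d (Fin.castLE hm i) := by
  simpa using hd.1 (univ.map (Fin.castLEEmb hm))

lemma CondI.sum_mul_le_sum_mul_val {n : ℕ} {d a : Fin n → ℝ} (hd : CondI d) (ha : Monotone a) :
    ∑ i, a i * d i ≤ ∑ i, a i * (i : ℝ) := by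
  -- Abel summation against `d i - i`, whose prefix sums are `≥ 0` by condition I and total `0`.
  set A : ℕ → ℝ := fun k => if h : k < n then a ⟨k, h⟩ else 0
  set G : ℕ → ℝ := fun k => if h : k < n then d ⟨k, h⟩ - k else 0
  have hprefix : ∀ m (hm : m ≤ n),
      ∑ k ∈ range m, G k = ∑ i : Fin m, d (Fin.castLE hm i) - m.choose 2 := by
    intro m hm
    rw [← Fin.sum_univ_eq_sum_range, ← sum_range_cast_eq_choose_two,
      ← Fin.sum_univ_eq_sum_range (fun i => (i : ℝ)), ← sum_sub_distrib]
    refine sum_congr rfl fun i _ => ?_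
    simp [G, i.is_lt.trans_le hm, Fin.castLE]
  have hA : MonotoneOn A (Set.Iio n) := by
    intro k hk l hl hkl
    simp only [Set.mem_Iio] at hk hl
    simpa [A, hk, hl] using ha (Fin.mk_le_mk.2 hkl)
  have habel := sum_range_mul_le_of_monotoneOn hA fun m hm => by
    rw [hprefix m hm, sub_nonneg]; exact hd.le_sum_castLE hm
  have htot : ∑ k ∈ range n, G k = 0 := by
    rw [hprefix n le_rfl, sub_eq_zero]; simpa using hd.2
  have hsum : ∑ k ∈ range n, A k * G k = ∑ i, a i * d i - ∑ i, a i * (i : ℝ) := by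
    rw [← Fin.sum_univ_eq_sum_range, ← sum_sub_distrib]
    simp [A, G, mul_sub]
  rw [htot, mul_zero] at habel
  linarith

lemma CondI.comp_perm {n : ℕ} {d : Fin n → ℝ} (hd : CondI d) (σ : Equiv.Perm (Fin n)) :
    CondI (d ∘ σ) := by
  refine ⟨fun J => ?_, by simpa [Function.comp_def, Equiv.sum_comp] using hd.2⟩
  simpa using hd.1 (J.map σ.toEmbedding)

lemma IsGenTournament.sum_sum_eq_choose_two {n : ℕ} {α : Fin n → Fin n → ℝ}
    (hα : IsGenTournament α) (J : Finset (Fin n)) :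
    ∑ i ∈ J, ∑ j ∈ J, α i j = ((#J).choose 2 : ℝ) := by
  have hpair : ∑ i ∈ J, ∑ j ∈ J, (α i j + α j i) = #J * (#J - 1) := by
    calc ∑ i ∈ J, ∑ j ∈ J, (α i j + α j i)
        = ∑ i ∈ J, ∑ j ∈ J, (1 - if i = j then (1 : ℝ) else 0) := by
          refine sum_congr rfl fun i _ => sum_congr rfl fun j _ => ?_
          split_ifs with hij
          · simp [hij, hα.2.2.2]
          · simpa using hα.2.2.1 i j hij
      _ = #J * (#J - 1) := by
          rw [← nsmul_eq_mul, ← sum_const]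
          refine sum_congr rfl fun i hi => ?_
          simp [sum_sub_distrib, hi]
  simp only [sum_add_distrib] at hpair
  rw [sum_comm (f := fun i j => α j i)] at hpair
  rw [Nat.cast_choose_two]
  linarith

lemma IsGenTournament.comp_perm {n : ℕ} {α : Fin n → Fin n → ℝ} (hα : IsGenTournament α)
    (σ : Equiv.Perm (Fin n)) : IsGenTournament fun i j => α (σ i) (σ j) :=
  ⟨fun _ _ => hα.1 _ _, fun _ _ => hα.2.1 _ _,
    fun _ _ hij => hα.2.2.1 _ _ (σ.injective.ne hij), fun _ => hα.2.2.2 _⟩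

lemma isCompact_setOf_isGenTournament (n : ℕ) :
    IsCompact {α : Fin n → Fin n → ℝ | IsGenTournament α} := by
  refine (isCompact_Icc (a := 0) (b := 1)).of_isClosed_subset ?_ fun α hα =>
    ⟨fun i j => hα.1 i j, fun i j => hα.2.1 i j⟩
  simp only [IsGenTournament, Set.ofPred_and, Set.ofPred_forall]
  repeat' first
    | apply IsClosed.inter
    | refine isClosed_iInter fun _ => ?_
    | apply isClosed_le
    | apply isClosed_eq
  all_goals fun_prop

lemma convex_setOf_isGenTournament (n : ℕ) :
    Convex ℝ {α : Fin n → Fin n → ℝ | IsGenTournament α} := by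
  rintro α ⟨hα₀, hα₁, hα, hα'⟩ β ⟨hβ₀, hβ₁, hβ, hβ'⟩ a b ha hb hab
  refine ⟨fun i j => ?_, fun i j => ?_, fun i j hij => ?_, fun i => ?_⟩ <;>
    simp only [Pi.add_apply, Pi.smul_apply, smul_eq_mul]
  · have := hα₀ i j; have := hβ₀ i j; positivity
  · nlinarith [hα₁ i j, hβ₁ i j]
  · linear_combination a * hα i j hij + b * hβ i j hij + hab
  · simp [hα' i, hβ' i]

namespace GenTournament

def score {n : ℕ} (α : Fin n → Fin n → ℝ) (i : Fin n) : ℝ := ∑ j, α i j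

def scoreSet (n : ℕ) : Set (Fin n → ℝ) := score '' {α | IsGenTournament α}

lemma isLinearMap_score (n : ℕ) : IsLinearMap ℝ (score (n := n)) :=
  ⟨fun _ _ => funext fun _ => sum_add_distrib, fun _ _ => funext fun _ => (mul_sum ..).symm⟩

lemma continuous_score (n : ℕ) : Continuous (score (n := n)) := by
  unfold score; fun_prop

lemma isCompact_scoreSet (n : ℕ) : IsCompact (scoreSet n) :=
  (isCompact_setOf_isGenTournament n).image (continuous_score n)

lemma convex_scoreSet (n : ℕ) : Convex ℝ (scoreSet n) :=
  (convex_setOf_isGenTournament n).is_linear_image (isLinearMap_score n)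

lemma score_comp_perm {n : ℕ} (α : Fin n → Fin n → ℝ) (σ : Equiv.Perm (Fin n)) :
    score (fun i j => α (σ i) (σ j)) = score α ∘ σ :=
  funext fun i => Equiv.sum_comp σ (α (σ i))

def transitive (n : ℕ) (i j : Fin n) : ℝ := if j < i then 1 else 0

lemma isGenTournament_transitive (n : ℕ) : IsGenTournament (transitive n) := by
  refine ⟨fun i j => ?_, fun i j => ?_, fun i j hij => ?_, fun i => by simp [transitive]⟩ <;>
    unfold transitive
  · positivity
  · split_ifs <;> norm_num
  · rcases hij.lt_or_gt with h | h <;> simp [h, h.not_gt]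

lemma score_transitive (n : ℕ) (i : Fin n) : score (transitive n) i = i := by
  simp [score, transitive, sum_boole, filter_gt_eq_Iio]

lemma condI_score {n : ℕ} {α : Fin n → Fin n → ℝ} (hα : IsGenTournament α) :
    CondI (score α) := by
  refine ⟨fun J => ?_, by simpa [score] using hα.sum_sum_eq_choose_two univ⟩
  rw [← hα.sum_sum_eq_choose_two J]
  exact sum_le_sum fun i _ => sum_le_sum_of_subset_of_nonneg (subset_univ J)
    fun j _ _ => hα.1 i j

lemma exists_mem_scoreSet_le {n : ℕ} {d : Fin n → ℝ} (hd : CondI d)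
    (f : (Fin n → ℝ) →ₗ[ℝ] ℝ) : ∃ e ∈ scoreSet n, f d ≤ f e := by
  set c : Fin n → ℝ := fun i => f fun j => if i = j then 1 else 0
  have hf : ∀ x, f x = ∑ i, c i * x i := fun x => by
    rw [f.pi_apply_eq_sum_univ x]; simp [c, mul_comm]
  set σ := Tuple.sort c
  refine ⟨_, ⟨_, (isGenTournament_transitive n).comp_perm σ.symm, rfl⟩, ?_⟩
  rw [score_comp_perm, hf, hf, ← Equiv.sum_comp σ, ← Equiv.sum_comp σ (fun i => c i * _)]
  simpa [score_transitive] using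
    (hd.comp_perm σ).sum_mul_le_sum_mul_val (Tuple.monotone_sort c)

theorem mem_scoreSet_iff {n : ℕ} {d : Fin n → ℝ} : d ∈ scoreSet n ↔ CondI d := by
  refine ⟨by rintro ⟨α, hα, rfl⟩; exact condI_score hα, fun hd => ?_⟩
  by_contra hnot
  obtain ⟨f, u, hfS, hfd⟩ := geometric_hahn_banach_closed_point (convex_scoreSet n)
    (isCompact_scoreSet n).isClosed hnot
  obtain ⟨e, he, hde⟩ := exists_mem_scoreSet_le hd f.toLinearMap
  exact (hfS e he).not_ge (hfd.le.trans hde)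

end GenTournament

theorem moon_general (n : ℕ) (d : Fin n → ℝ) :
    (∃ α : Fin n → Fin n → ℝ, IsGenTournament α ∧ ∀ i, ∑ j, α i j = d i) ↔ CondI d := by
  simp [← GenTournament.mem_scoreSet_iff, GenTournament.scoreSet, GenTournament.score, funext_iff]

/-- Moon's theorem: a non-decreasing sequence of non-negative reals is the score sequence
of some generalised tournament iff it satisfies condition I. -/
theorem moon (n : ℕ) (d : Fin n → ℝ) (hmono : Monotone d) (hpos : ∀ i, 0 ≤ d i) :
    (∃ α : Fin n → Fin n → ℝ, IsGenTournament α ∧ ∀ i, ∑ j, α i j = d i) ↔ CondI d :=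
  moon_general n d
end

section
/- Let m be an odd positive integer and let (d_1, ..., d_n) be a non-decreasing sequence of non-negative real numbers satisfying condition I and such that m·d_i is an integer for each i. Then there exists a (non-generalised) tournament on mn vertices in which, for each i = 1,...,n, exactly m vertices have outdegree m·d_i + (m-1)/2. (Blow-up of a generalised tournament realising (d_i), replacing each vertex by a regular tournament on m vertices.) -/
/-- A (non-generalised) tournament: a `{0,1}`-valued weight function with
`α u v + α v u = 1` for `u ≠ v` and `α v v = 0`. -/
def IsTournament {V : Type*} (α : V → V → ℝ) : Prop :=
  (∀ u v, α u v = 0 ∨ α u v = 1) ∧ (∀ u v, u ≠ v → α u v + α v u = 1) ∧ (∀ v, α v v = 0)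

/-!
Give every vertex of block `i` the score `m·dᵢ + (m-1)/2` and realise these scores by Landau's
theorem: a score function `e` with `∑_{v ∈ S} e v ≥ C(|S|, 2)` for every vertex set `S`, with
equality for the whole vertex set, is the outdegree function of a tournament. Landau's theorem is
Hall's theorem, matching every pair `{u, v}` to one of the `e u + e v` winning slots of its ends.
For a vertex set `S` of the blow-up meeting block `i` in `aᵢ ≤ m` vertices, Landau's inequality
comes from cutting `S` into the `m` layers `{i | t < aᵢ}`: condition I bounds the score of each
layer and Cauchy–Schwarz bounds the sum of the squared layer sizes below by `|S|²/m`.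
-/

open Finset

theorem exists_injective_of_card_le_sum_capacity {ι V : Type*} [DecidableEq V]
    (t : ι → Finset V) (e : V → ℕ) (h : ∀ s : Finset ι, #s ≤ ∑ v ∈ s.biUnion t, e v) :
    ∃ f : ι → (_ : V) × ℕ, Function.Injective f ∧ ∀ i, (f i).1 ∈ t i ∧ (f i).2 < e (f i).1 := by
  let slots (B : Finset V) : Finset ((_ : V) × ℕ) := B.sigma fun v => range (e v)
  have hslots : ∀ s : Finset ι, #s ≤ #(s.biUnion fun i => slots (t i)) := by
    intro s
    have hunion : s.biUnion (fun i => slots (t i)) = slots (s.biUnion t) := by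
      ext x
      simp only [slots, mem_biUnion, mem_sigma]
      tauto
    simpa [hunion, slots] using h s
  obtain ⟨f, hinj, hf⟩ := (all_card_le_biUnion_card_iff_exists_injective _).1 hslots
  exact ⟨f, hinj, fun i => by simpa [slots] using hf i⟩

section Landau

variable {V : Type*} [DecidableEq V]

def LandauCondition [Fintype V] (e : V → ℕ) : Prop :=
  (∀ S : Finset V, (#S).choose 2 ≤ ∑ v ∈ S, e v) ∧ ∑ v, e v = (Fintype.card V).choose 2

def tournamentOfWinner (w : {z : Sym2 V // ¬z.IsDiag} → V) (u v : V) : ℝ :=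
  if h : u = v then 0 else if w ⟨s(u, v), Sym2.mk_isDiag_iff.not.2 h⟩ = u then 1 else 0

theorem isTournament_tournamentOfWinner (w : {z : Sym2 V // ¬z.IsDiag} → V)
    (hw : ∀ z, w z ∈ z.1) : IsTournament (tournamentOfWinner w) := by
  refine ⟨fun u v => ?_, fun u v huv => ?_, fun v => by simp [tournamentOfWinner]⟩
  · unfold tournamentOfWinner
    split_ifs <;> simp
  · have hswap : (⟨s(v, u), Sym2.mk_isDiag_iff.not.2 huv.symm⟩ : {z : Sym2 V // ¬z.IsDiag}) =
        ⟨s(u, v), Sym2.mk_isDiag_iff.not.2 huv⟩ := Subtype.ext Sym2.eq_swap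
    have hmem := hw ⟨s(u, v), Sym2.mk_isDiag_iff.not.2 huv⟩
    rw [Sym2.mem_iff] at hmem
    simp only [tournamentOfWinner, dif_neg huv, dif_neg (Ne.symm huv), hswap]
    rcases hmem with h | h <;> simp [h, huv, Ne.symm huv]

theorem sum_tournamentOfWinner [Fintype V] (w : {z : Sym2 V // ¬z.IsDiag} → V)
    (hw : ∀ z, w z ∈ z.1) (v : V) :
    ∑ u, tournamentOfWinner w v u = #{z | w z = v} := by
  have hterm : ∀ u, tournamentOfWinner w v u =
      if ∃ h : v ≠ u, w ⟨s(v, u), Sym2.mk_isDiag_iff.not.2 h⟩ = v then 1 else 0 := by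
    intro u
    by_cases h : v = u <;> simp [tournamentOfWinner, h]
  simp only [hterm, sum_boole, Nat.cast_inj]
  refine card_bij (fun u hu => ⟨s(v, u), Sym2.mk_isDiag_iff.not.2 (mem_filter.1 hu).2.1⟩)
    (fun u hu => ?_) (fun u hu u' _ huu' => ?_) (fun z hz => ?_)
  · obtain ⟨_, _, hwin⟩ := mem_filter.1 hu
    simpa using hwin
  · obtain ⟨_, hvu, _⟩ := mem_filter.1 hu
    simpa [hvu.symm] using congrArg Subtype.val huu'
  · have hv : v ∈ z.1 := (mem_filter.1 hz).2 ▸ hw z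
    have hne : v ≠ Sym2.Mem.other hv := (Sym2.other_ne z.2 hv).symm
    have hz' : z = ⟨s(v, Sym2.Mem.other hv), Sym2.mk_isDiag_iff.not.2 hne⟩ :=
      Subtype.ext (Sym2.other_spec hv).symm
    refine ⟨Sym2.Mem.other hv, mem_filter.2 ⟨mem_univ _, hne, ?_⟩, hz'.symm⟩
    rw [← hz']
    exact (mem_filter.1 hz).2

theorem exists_winner_of_landau [Fintype V] {e : V → ℕ} (he : LandauCondition e) :
    ∃ w : {z : Sym2 V // ¬z.IsDiag} → V, (∀ z, w z ∈ z.1) ∧ ∀ v, #{z | w z = v} = e v := by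
  have hhall : ∀ s : Finset {z : Sym2 V // ¬z.IsDiag},
      #s ≤ ∑ v ∈ s.biUnion (fun z => z.1.toFinset), e v := by
    intro s
    set B := s.biUnion (fun z => z.1.toFinset)
    have hmaps : Set.MapsTo (Subtype.val : {z : Sym2 V // ¬z.IsDiag} → Sym2 V) s
        (B.offDiag.image Sym2.mk.uncurry) := by
      rintro ⟨z, hz⟩ hzs
      induction z using Sym2.ind with
      | h a b =>
        have hB : ∀ x ∈ s(a, b), x ∈ B := fun x hx =>
          mem_biUnion.2 ⟨⟨s(a, b), hz⟩, hzs, Sym2.mem_toFinset.2 hx⟩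
        exact mem_image.2 ⟨(a, b), mem_offDiag.2 ⟨hB a (Sym2.mem_mk_left a b),
          hB b (Sym2.mem_mk_right a b), Sym2.mk_isDiag_iff.not.1 hz⟩, rfl⟩
    calc #s ≤ #(B.offDiag.image Sym2.mk.uncurry) :=
          card_le_card_of_injOn Subtype.val hmaps Subtype.val_injective.injOn
      _ = (#B).choose 2 := Sym2.card_image_offDiag B
      _ ≤ ∑ v ∈ B, e v := he.1 B
  obtain ⟨f, hinj, hf⟩ := exists_injective_of_card_le_sum_capacity _ e hhall
  have hfiber_le : ∀ v, #{z | (f z).1 = v} ≤ e v := fun v =>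
    calc #{z | (f z).1 = v} ≤ #(range (e v)) := by
          refine card_le_card_of_injOn (fun z => (f z).2) (fun z hz => ?_) (fun z hz z' hz' h => ?_)
          · rw [mem_coe, mem_filter] at hz
            simpa [← hz.2] using (hf z).2
          · rw [mem_coe, mem_filter] at hz hz'
            exact hinj (Sigma.ext (hz.2.trans hz'.2.symm) (heq_of_eq h))
      _ = e v := card_range _
  have hsum : ∑ v, #{z | (f z).1 = v} = ∑ v, e v := by
    rw [he.2, ← Sym2.card_subtype_not_diag, ← card_univ]
    exact (card_eq_sum_card_fiberwise fun z _ => mem_univ (f z).1).symm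
  refine ⟨fun z => (f z).1, fun z => Sym2.mem_toFinset.1 (hf z).1, fun v => ?_⟩
  exact (sum_eq_sum_iff_of_le fun v _ => hfiber_le v).1 hsum v (mem_univ v)

theorem exists_tournament_of_landau [Fintype V] {e : V → ℕ} (he : LandauCondition e) :
    ∃ α : V → V → ℝ, IsTournament α ∧ ∀ v, ∑ u, α v u = e v := by
  obtain ⟨w, hw, hscore⟩ := exists_winner_of_landau he
  exact ⟨tournamentOfWinner w, isTournament_tournamentOfWinner w hw, fun v => by
    rw [sum_tournamentOfWinner w hw, hscore]⟩

end Landau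

section BlowUp

variable {ι : Type*} [Fintype ι]

theorem sum_mul_eq_sum_range_sum_filter_lt (m : ℕ) (a : ι → ℕ) (ha : ∀ i, a i ≤ m)
    (g : ι → ℝ) : ∑ i, (a i : ℝ) * g i = ∑ t ∈ range m, ∑ i with t < a i, g i := by
  have hlayers : ∀ i, {t ∈ range m | t < a i} = range (a i) := fun i => by
    ext t
    simp only [mem_filter, mem_range]
    exact ⟨And.right, fun ht => ⟨ht.trans_le (ha i), ht⟩⟩
  simp only [sum_filter]
  rw [sum_comm]
  refine sum_congr rfl fun i _ => ?_
  rw [← sum_filter, hlayers, sum_const, card_range, nsmul_eq_mul]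

theorem choose_two_sum_le_of_forall_choose_two_le (d : ι → ℝ)
    (hd : ∀ J : Finset ι, ((#J).choose 2 : ℝ) ≤ ∑ i ∈ J, d i) (m : ℕ) (a : ι → ℕ)
    (ha : ∀ i, a i ≤ m) :
    ((∑ i, a i).choose 2 : ℝ) ≤ m * ∑ i, a i * d i + (∑ i, a i : ℝ) * ((m : ℝ) - 1) / 2 := by
  set b : ℕ → ℕ := fun t => #{i | t < a i}
  have hcard : (∑ i, a i : ℝ) = ∑ t ∈ range m, (b t : ℝ) := by
    simpa using sum_mul_eq_sum_range_sum_filter_lt m a ha 1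
  have hlayers : ∑ t ∈ range m, ((b t).choose 2 : ℝ) ≤ ∑ i, a i * d i := by
    rw [sum_mul_eq_sum_range_sum_filter_lt m a ha]
    exact sum_le_sum fun t _ => hd _
  have hchoose : ∑ t ∈ range m, ((b t).choose 2 : ℝ) =
      (∑ t ∈ range m, (b t : ℝ) ^ 2 - ∑ t ∈ range m, (b t : ℝ)) / 2 := by
    simp only [Nat.cast_choose_two, ← sum_sub_distrib, sum_div]
    exact sum_congr rfl fun t _ => by ring
  have hcs : (∑ t ∈ range m, (b t : ℝ)) ^ 2 ≤ m * ∑ t ∈ range m, (b t : ℝ) ^ 2 := by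
    simpa using sq_sum_le_card_mul_sum_sq (s := range m) (f := fun t => (b t : ℝ))
  have hm : (0 : ℝ) ≤ m := m.cast_nonneg
  rw [Nat.cast_choose_two, Nat.cast_sum, hcard]
  nlinarith [mul_le_mul_of_nonneg_left hlayers hm]

theorem choose_two_card_le_sum_blowup [DecidableEq ι] (d : ι → ℝ)
    (hd : ∀ J : Finset ι, ((#J).choose 2 : ℝ) ≤ ∑ i ∈ J, d i) (m : ℕ) (S : Finset (ι × Fin m)) :
    ((#S).choose 2 : ℝ) ≤ ∑ p ∈ S, ((m : ℝ) * d p.1 + ((m : ℝ) - 1) / 2) := by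
  set a : ι → ℕ := fun i => #{p ∈ S | p.1 = i}
  have ha : ∀ i, a i ≤ m := fun i => by
    refine (card_le_card_of_injOn Prod.snd (fun _ _ => mem_univ _) fun p hp q hq h => ?_).trans_eq
      (card_fin m)
    rw [mem_coe, mem_filter] at hp hq
    exact Prod.ext (hp.2.trans hq.2.symm) h
  have hS : #S = ∑ i, a i := card_eq_sum_card_fiberwise fun p _ => mem_univ p.1
  calc ((#S).choose 2 : ℝ)
      ≤ m * ∑ i, a i * d i + (∑ i, a i : ℝ) * ((m : ℝ) - 1) / 2 :=
        hS ▸ choose_two_sum_le_of_forall_choose_two_le d hd m a ha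
    _ = ∑ i, (a i : ℝ) * ((m : ℝ) * d i + ((m : ℝ) - 1) / 2) := by
        simp only [mul_add, sum_add_distrib, mul_sum, sum_mul, sum_div]
        congr 1 <;> exact sum_congr rfl fun i _ => by ring
    _ = ∑ p ∈ S, ((m : ℝ) * d p.1 + ((m : ℝ) - 1) / 2) := by
        rw [← sum_fiberwise' S Prod.fst fun i => (m : ℝ) * d i + ((m : ℝ) - 1) / 2]
        simp [a, mul_add]

end BlowUp

theorem exists_blowup_tournament_general (n m : ℕ) (hm : Odd m)
    (d : Fin n → ℝ) (hI : CondI d)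
    (hint : ∀ i, ∃ z : ℕ, (m : ℝ) * d i = (z : ℝ)) :
    ∃ αH : Fin n × Fin m → Fin n × Fin m → ℝ, IsTournament αH ∧
      ∀ (i : Fin n) (ℓ : Fin m),
        ∑ u : Fin n × Fin m, αH (i, ℓ) u = (m : ℝ) * d i + ((m : ℝ) - 1) / 2 := by
  obtain ⟨k, hk⟩ := hm
  have hmk : (m : ℝ) = 2 * k + 1 := by exact_mod_cast hk
  choose c hc using hint
  let score (p : Fin n × Fin m) : ℕ := c p.1 + k
  have hscore : ∀ p, (score p : ℝ) = m * d p.1 + ((m : ℝ) - 1) / 2 := fun p => by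
    rw [Nat.cast_add, ← hc, hmk]
    ring
  have hsub (S : Finset (Fin n × Fin m)) : (#S).choose 2 ≤ ∑ p ∈ S, score p := by
    have h := choose_two_card_le_sum_blowup d hI.1 m S
    rw [← sum_congr rfl fun p _ => hscore p] at h
    exact_mod_cast h
  have htot : ∑ p, score p = (Fintype.card (Fin n × Fin m)).choose 2 := by
    rw [← Nat.cast_inj (R := ℝ), Nat.cast_sum, Fintype.sum_prod_type]
    simp only [hscore, sum_const, card_univ, Fintype.card_fin, nsmul_eq_mul, sum_add_distrib,
      ← mul_sum, hI.2, Fintype.card_prod, Nat.cast_choose_two]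
    push_cast
    ring
  obtain ⟨α, hα, hdeg⟩ := exists_tournament_of_landau (e := score) ⟨hsub, htot⟩
  exact ⟨α, hα, fun i ℓ => (hdeg (i, ℓ)).trans (hscore (i, ℓ))⟩

/-- Blow-up: if `m` is odd, each `m·d i` is a non-negative integer and `(d i)` satisfies
condition I, then there is a tournament on the `mn` vertices `Fin n × Fin m` in which,
for each `i`, the `m` vertices `(i, ℓ)` have outdegree `m·d i + (m-1)/2`. -/
theorem exists_blowup_tournament (n m : ℕ) (hm : Odd m) (hm0 : 0 < m)
    (d : Fin n → ℝ) (hmono : Monotone d) (hpos : ∀ i, 0 ≤ d i) (hI : CondI d)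
    (hint : ∀ i, ∃ z : ℕ, (m : ℝ) * d i = (z : ℝ)) :
    ∃ αH : Fin n × Fin m → Fin n × Fin m → ℝ, IsTournament αH ∧
      ∀ (i : Fin n) (ℓ : Fin m),
        ∑ u : Fin n × Fin m, αH (i, ℓ) u = (m : ℝ) * d i + ((m : ℝ) - 1) / 2 :=
  exists_blowup_tournament_general n m hm d hI hint
end
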